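/- Fix positive integers k and n, let λ be a partition contained in an n×k rectangle, p ∈ {0,1}, and set a_i = λ_i + (n-i) + (p+1)/2. Define the q-Catalan-triangle numbers 𝒞_{N,K}(q) = ([N-K+1]_q/[N+1]_q)·qbinom(N+K, K)_q for 0 ≤ K ≤ N (and 0 otherwise). Then det[ 𝒞_{2n-i-j+k+p+λ_j, j-i+k-λ_j}(q) ]_{i,j=1}^{n} = q^{‖λ̄‖} · (∏_{i=1}^{n} [2k+p+2i-2]_q! · [2a_i]_q) · (∏_{1≤i<j≤n} [a_i - a_j]_q [a_i + a_j]_q) / (∏_{i=1}^{n} [k+n-a_i+(p-1)/2]_q! · [k+n+a_i+(p-1)/2]_q!). -/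

import Mathlib

open Finset

noncomputable section

/-- The generic variable `q`, as a rational function over `ℚ`. -/
def q : RatFunc ℚ := RatFunc.X

/-- The `q`-integer `[m]_q`. -/
def qint (m : ℕ) : RatFunc ℚ := ∑ i ∈ Finset.range m, q ^ i

/-- The `q`-factorial `[m]_q!`. -/
def qfact (m : ℕ) : RatFunc ℚ := ∏ i ∈ Finset.range m, qint (i + 1)

/-- The Gaussian binomial coefficient, `0` outside the valid range. -/
def qbinom (a b : ℕ) : RatFunc ℚ :=
  if b ≤ a then qfact a / (qfact b * qfact (a - b)) else 0

/-- The `q`-Catalan-triangle number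
`𝒞_{N,K}(q) = ([N-K+1]_q/[N+1]_q) · qbinom(N+K, K)` for `0 ≤ K ≤ N`, `0` otherwise,
with an integer argument `K`. -/
def qcatZ (N : ℕ) (c : ℤ) : RatFunc ℚ :=
  if 0 ≤ c ∧ c ≤ (N : ℤ) then
    qint (N - c.toNat + 1) * qbinom (N + c.toNat) c.toNat / qint (N + 1)
  else 0

/-!
Pull the factor `[2b_j+p+1] / ([k+n-1-b_j]! [k+n+b_j+p]!)` out of column `j` and
`[2(k+n-1-i)+p]!` out of row `i` (0-indexed, `b_j = λ_j + n - 1 - j`). What remains in entry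
`(i, j)` is `∏_{t<i} [x_t - b_j] [x_t + b_j + p + 1]` with `x_t = k + n - 1 - t`, and
`[x - b] [x + b + p + 1] = q^x (w(x) - w(b))` for `w(b) = (q^{-b} + q^{b+p+1}) / (q-1)^2`,
a function of `q^a + q^{-a}` with `a = b + (p+1)/2`. So the determinant is, up to powers of `q`,
an alternant in the values `w(b_j)`, i.e. the Vandermonde product `∏_{i<j} (w(b_i) - w(b_j))`,
whose factors are again `q^{-b_i} [b_i - b_j] [b_i + b_j + p + 1]`. The surviving powers of `q`
add up to `‖λ̄‖`.
-/

open Finset Matrix Polynomial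

lemma q_ne_zero : q ≠ 0 := RatFunc.X_ne_zero

lemma q_pow_sub_one_ne_zero {m : ℕ} (hm : 0 < m) : q ^ m - 1 ≠ 0 := by
  rw [q, ← RatFunc.algebraMap_X, ← map_pow, ← map_one (algebraMap ℚ[X] (RatFunc ℚ)), ← map_sub,
    Ne, map_eq_zero_iff _ (RatFunc.algebraMap_injective ℚ)]
  simpa using X_pow_sub_C_ne_zero hm (1 : ℚ)

lemma qint_mul_sub_one (m : ℕ) : qint m * (q - 1) = q ^ m - 1 := geom_sum_mul q m

lemma qint_ne_zero {m : ℕ} (hm : 0 < m) : qint m ≠ 0 :=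
  left_ne_zero_of_mul (qint_mul_sub_one m ▸ q_pow_sub_one_ne_zero hm)

lemma qfact_ne_zero (m : ℕ) : qfact m ≠ 0 :=
  prod_ne_zero_iff.mpr fun i _ => qint_ne_zero i.succ_pos

lemma qfact_succ (m : ℕ) : qfact (m + 1) = qfact m * qint (m + 1) := prod_range_succ _ m

lemma qfact_add (m d : ℕ) : qfact (m + d) = qfact m * ∏ t ∈ range d, qint (m + d - t) := by
  induction d with
  | zero => simp
  | succ d ih =>
    rw [← add_assoc, qfact_succ, ih, prod_range_succ', mul_assoc, Nat.sub_zero]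
    simp only [Nat.add_sub_add_right]

def qcosh (p b : ℕ) : RatFunc ℚ := ((q ^ b)⁻¹ + q ^ (b + p + 1)) / (q - 1) ^ 2

lemma qcosh_sub_mul {p b x : ℕ} (h : b ≤ x) :
    (qcosh p x - qcosh p b) * q ^ x = qint (x - b) * qint (x + b + p + 1) := by
  obtain ⟨c, rfl⟩ := Nat.exists_eq_add_of_le h
  have hq1 : q - 1 ≠ 0 := by simpa using q_pow_sub_one_ne_zero one_pos
  have hq := q_ne_zero
  rw [Nat.add_sub_cancel_left, ← mul_div_cancel_right₀ (qint c * _) (pow_ne_zero 2 hq1),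
    show qint c * qint (b + c + b + p + 1) * (q - 1) ^ 2
      = qint c * (q - 1) * (qint (b + c + b + p + 1) * (q - 1)) by ring,
    qint_mul_sub_one, qint_mul_sub_one, qcosh, qcosh]
  field_simp
  ring

lemma qcatZ_sub_of_le {m b p : ℕ} (h : b ≤ m) :
    qcatZ (m + b + p) ((m : ℤ) - b)
      = qint (2 * b + p + 1) * qfact (2 * m + p) / (qfact (m - b) * qfact (m + b + p + 1)) := by
  rw [qcatZ, if_pos (by omega), show ((m : ℤ) - b).toNat = m - b by omega, qbinom,
    if_pos (by omega), show m + b + p - (m - b) + 1 = 2 * b + p + 1 by omega,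
    show m + b + p + (m - b) = 2 * m + p by omega,
    show 2 * m + p - (m - b) = m + b + p by omega, qfact_succ]
  have := qint_ne_zero (m + b + p).succ_pos
  have := qfact_ne_zero (m + b + p)
  have := qfact_ne_zero (m - b)
  field_simp

lemma qcatZ_sub_of_lt {m b p : ℕ} (h : m < b) : qcatZ (m + b + p) ((m : ℤ) - b) = 0 := by
  rw [qcatZ, if_neg (by omega)]

lemma qcatZ_eq_mul_prod {A i b p : ℕ} (hi : i < A) (hb : b < A) :
    qcatZ (A - 1 - i + b + p) (((A - 1 - i : ℕ) : ℤ) - b)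
      = qint (2 * b + p + 1) / (qfact (A - 1 - b) * qfact (A + b + p))
        * ((qfact (2 * (A - 1 - i) + p) * ∏ t ∈ range i, q ^ (A - 1 - t))
          * ∏ t ∈ range i, (qcosh p (A - 1 - t) - qcosh p b)) := by
  obtain ⟨m, rfl⟩ : ∃ m, A = m + i + 1 := ⟨A - 1 - i, by omega⟩
  simp only [Nat.add_sub_cancel]
  rcases le_or_gt b m with hbm | hmb
  · have hden₁ : qfact (m + i - b) = qfact (m - b) * ∏ t ∈ range i, qint (m + i - t - b) := by
      rw [show m + i - b = m - b + i by omega, qfact_add]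
      exact congrArg _ (prod_congr rfl fun t ht => by rw [mem_range] at ht; congr 1; omega)
    have hden₂ : qfact (m + i + 1 + b + p)
        = qfact (m + b + p + 1) * ∏ t ∈ range i, qint (m + i - t + b + p + 1) := by
      rw [show m + i + 1 + b + p = m + b + p + 1 + i by omega, qfact_add]
      exact congrArg _ (prod_congr rfl fun t ht => by rw [mem_range] at ht; congr 1; omega)
    have hprod : (∏ t ∈ range i, q ^ (m + i - t))
          * ∏ t ∈ range i, (qcosh p (m + i - t) - qcosh p b)
        = ∏ t ∈ range i, (qint (m + i - t - b) * qint (m + i - t + b + p + 1)) := by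
      rw [← prod_mul_distrib]
      exact prod_congr rfl fun t ht => by
        rw [mem_range] at ht; rw [mul_comm, qcosh_sub_mul (by omega)]
    have hne : ∏ t ∈ range i, qint (m + i - t + b + p + 1) ≠ 0 :=
      prod_ne_zero_iff.mpr fun t _ => qint_ne_zero (Nat.succ_pos _)
    have hne' : ∏ t ∈ range i, qint (m + i - t - b) ≠ 0 :=
      prod_ne_zero_iff.mpr fun t ht => qint_ne_zero (by rw [mem_range] at ht; omega)
    have := qfact_ne_zero (m - b)
    have := qfact_ne_zero (m + b + p + 1)
    rw [qcatZ_sub_of_le hbm, mul_assoc (qfact _), hprod, hden₁, hden₂, prod_mul_distrib]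
    field_simp
  · -- the factor `t = m + i - b` of the product is `qcosh p b - qcosh p b`
    rw [qcatZ_sub_of_lt hmb,
      prod_eq_zero (f := fun t => qcosh p (m + i - t) - qcosh p b)
        (mem_range.mpr (show m + i - b < i by omega))
        (by rw [show m + i - (m + i - b) = b by omega, sub_self]),
      mul_zero, mul_zero]

lemma det_prod_range_sub {R : Type*} [CommRing R] {n : ℕ} (w : Fin n → ℕ → R)
    (v : Fin n → R) :
    det (of fun i j : Fin n => ∏ t ∈ range i, (w i t - v j)) = ∏ i, ∏ j ∈ Ioi i, (v i - v j) := by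
  cases subsingleton_or_nontrivial R
  · exact Subsingleton.elim _ _
  let P : Fin n → R[X] := fun i => ∏ t ∈ range i, (X + C (w i t))
  have hmonic : ∀ i, (P i).Monic := fun i =>
    monic_prod_of_monic _ _ fun t _ => monic_X_add_C _
  have hdeg : ∀ i, (P i).natDegree = i := fun i => by
    simp [P, natDegree_prod_of_monic _ _ fun t _ => monic_X_add_C _]
  have hP : (of fun i j : Fin n => ∏ t ∈ range i, (w i t - v j))
      = (of fun i j => (P j).eval (-v i))ᵀ := by
    ext i j
    simp [P, eval_prod, neg_add_eq_sub]
  rw [hP, det_transpose, ← det_eval_matrixOfPolynomials_eq_det_vandermonde _ _ hdeg hmonic,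
    det_vandermonde]
  simp only [neg_sub_neg]

lemma prod_Ioi_qcosh_sub {n p : ℕ} {b : Fin n → ℕ} (hb : Antitone b) :
    ∏ i, ∏ j ∈ Ioi i, (qcosh p (b i) - qcosh p (b j))
      = (∏ i : Fin n, ((q ^ b i)⁻¹) ^ (n - 1 - i))
        * ∏ i, ∏ j ∈ Ioi i, (qint (b i - b j) * qint (b i + b j + p + 1)) := by
  rw [← prod_mul_distrib]
  refine prod_congr rfl fun i _ => ?_
  rw [← Fin.card_Ioi, ← prod_const, ← prod_mul_distrib]
  refine prod_congr rfl fun j hj => ?_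
  rw [← qcosh_sub_mul (hb (mem_Ioi.mp hj).le)]
  field_simp [q_ne_zero]

lemma sum_range_sum_range {M : Type*} [AddCommMonoid M] (n : ℕ) (f : ℕ → M) :
    ∑ i ∈ range n, ∑ t ∈ range i, f t = ∑ t ∈ range n, (n - 1 - t) • f t := by
  induction n with
  | zero => simp
  | succ n ih =>
    rw [sum_range_succ, ih, sum_range_succ, Nat.add_sub_cancel, Nat.sub_self, zero_smul,
      add_zero, ← sum_add_distrib]
    refine sum_congr rfl fun t ht => ?_
    rw [mem_range] at ht
    rw [show n - t = n - 1 - t + 1 by omega, succ_nsmul]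

lemma sum_sum_range_sub_eq (n k : ℕ) (l : Fin n → ℕ) (hl : ∀ i, l i ≤ k) :
    ∑ i : Fin n, ∑ t ∈ range i, (k + n - 1 - t)
      = ∑ i : Fin n, i * (k - l i.rev) + ∑ i : Fin n, (l i + (n - 1 - i)) * (n - 1 - i) := by
  rw [← Equiv.sum_comp Fin.revPerm (fun i : Fin n => i * (k - l i.rev)), ← sum_add_distrib,
    Fin.sum_univ_eq_sum_range (fun i => ∑ t ∈ range i, (k + n - 1 - t)), sum_range_sum_range]
  rw [← Fin.sum_univ_eq_sum_range (fun t => (n - 1 - t) • (k + n - 1 - t))]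
  refine sum_congr rfl fun i _ => ?_
  have := hl i
  rw [Fin.revPerm_apply, Fin.rev_rev, Fin.val_rev, smul_eq_mul,
    show k + n - 1 - i = (k - l i) + (l i + (n - 1 - i)) by omega,
    show n - (i + 1) = n - 1 - i by omega]
  ring

lemma prod_q_pow_mul_prod_inv_pow (n k : ℕ) (l : Fin n → ℕ) (hl : ∀ i, l i ≤ k) :
    (∏ i : Fin n, ∏ t ∈ range i, q ^ (k + n - 1 - t))
        * ∏ i : Fin n, ((q ^ (l i + (n - 1 - i)))⁻¹) ^ (n - 1 - i)
      = q ^ ∑ i : Fin n, i * (k - l i.rev) := by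
  simp only [prod_pow_eq_pow_sum, inv_pow, ← pow_mul, prod_inv_distrib]
  rw [sum_sum_range_sub_eq n k l hl, pow_add, mul_assoc,
    mul_inv_cancel₀ (pow_ne_zero _ q_ne_zero), mul_one]

/-- Indices are 0-based: `l i = λ_{i+1}`, and with `b_i = l i + (n - 1 - i)` one has
`2a_i = 2b_i + p + 1`, `a_i - a_j = b_i - b_j`,
`a_i + a_j = b_i + b_j + p + 1`, `k+n-a_i+(p-1)/2 = k - λ_i + i - 1` and
`k+n+a_i+(p-1)/2 = k+n+b_i+p`. -/
theorem stmt5_general (n k p : ℕ)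
    (l : Fin n → ℕ)
    (hl : ∀ i j : Fin n, i ≤ j → l j ≤ l i) (hbd : ∀ i, l i ≤ k) :
    Matrix.det (Matrix.of fun i j : Fin n =>
        qcatZ (2 * n - 2 - (i : ℕ) - (j : ℕ) + k + p + l j)
          ((j : ℤ) - (i : ℕ) + k - (l j : ℤ)))
      = q ^ (∑ i : Fin n, (i : ℕ) * (k - l i.rev))
        * (∏ i : Fin n, qfact (2 * k + p + 2 * (i : ℕ))
            * qint (2 * (l i + (n - 1 - (i : ℕ))) + p + 1))
        * (∏ i : Fin n, ∏ j ∈ Finset.Ioi i,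
            qint ((l i + (n - 1 - (i : ℕ))) - (l j + (n - 1 - (j : ℕ))))
              * qint ((l i + (n - 1 - (i : ℕ))) + (l j + (n - 1 - (j : ℕ))) + p + 1))
        / (∏ i : Fin n,
            qfact (k - l i + (i : ℕ))
              * qfact (k + 2 * n - 1 - (i : ℕ) + l i + p)) := by
  set b : Fin n → ℕ := fun i => l i + (n - 1 - i)
  have hb_anti : Antitone b := fun i j hij => by
    have := hl i j hij
    have : (i : ℕ) ≤ j := hij
    simp only [b]
    omega
  have hentry : (of fun i j : Fin n => qcatZ (2 * n - 2 - (i : ℕ) - (j : ℕ) + k + p + l j)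
        ((j : ℤ) - (i : ℕ) + k - (l j : ℤ)))
      = of fun (i j : Fin n) =>
          qint (2 * b j + p + 1) / (qfact (k + n - 1 - b j) * qfact (k + n + b j + p))
          * (of fun (i j : Fin n) =>
              (qfact (2 * (k + n - 1 - i) + p) * ∏ t ∈ range i, q ^ (k + n - 1 - t))
              * of (fun (i j : Fin n) =>
                  ∏ t ∈ range i, (qcosh p (k + n - 1 - t) - qcosh p (b j))) i j) i j := by
    ext i j
    have := hbd j
    simp only [of_apply, b]
    rw [← qcatZ_eq_mul_prod (by omega) (by omega)]
    congr 1 <;> omega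
  have hrow : ∏ i : Fin n, qfact (2 * (k + n - 1 - i) + p)
      = ∏ i : Fin n, qfact (2 * k + p + 2 * i) := by
    rw [← Equiv.prod_comp Fin.revPerm]
    exact prod_congr rfl fun i _ => by rw [Fin.revPerm_apply, Fin.val_rev]; congr 1; omega
  have hden : ∏ i, qfact (k + n - 1 - b i) * qfact (k + n + b i + p)
      = ∏ i : Fin n, qfact (k - l i + i) * qfact (k + 2 * n - 1 - i + l i + p) :=
    prod_congr rfl fun i _ => by have := hbd i; simp only [b]; congr 2 <;> omega
  rw [hentry, det_mul_row, det_mul_column, det_prod_range_sub, prod_Ioi_qcosh_sub hb_anti,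
    prod_div_distrib, hden]
  simp only [prod_mul_distrib]
  rw [hrow, ← prod_q_pow_mul_prod_inv_pow n k l hbd]
  simp only [b]
  ring

/-- Type `BC` multiplicity formula: for `p ∈ {0,1}` and a partition `λ` inside an
`n × k` rectangle (`l i = λ_{i+1}`), with `a_i = λ_i + (n-i) + (p+1)/2` (writing
`b_i = λ_i + n - i` we have `2a_i = 2b_i + p + 1`, `a_i - a_j = b_i - b_j`,
`a_i + a_j = b_i + b_j + p + 1`, `k+n-a_i+(p-1)/2 = k - λ_i + i - 1` and
`k+n+a_i+(p-1)/2 = k+n+b_i+p`):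
`det[ 𝒞_{2n-i-j+k+p+λ_j, j-i+k-λ_j}(q) ]_{i,j=1}^n
  = q^{‖λ̄‖} ∏_i [2k+p+2i-2]! [2a_i] ∏_{i<j} [a_i-a_j][a_i+a_j]
      / ∏_i [k+n-a_i+(p-1)/2]! [k+n+a_i+(p-1)/2]!`. -/
theorem stmt5 (n k p : ℕ) (hp : p ≤ 1) (hn : 0 < n) (hk : 0 < k)
    (l : Fin n → ℕ)
    (hl : ∀ i j : Fin n, i ≤ j → l j ≤ l i) (hbd : ∀ i, l i ≤ k) :
    Matrix.det (Matrix.of fun i j : Fin n =>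
        qcatZ (2 * n - 2 - (i : ℕ) - (j : ℕ) + k + p + l j)
          ((j : ℤ) - (i : ℕ) + k - (l j : ℤ)))
      = q ^ (∑ i : Fin n, (i : ℕ) * (k - l i.rev))
        * (∏ i : Fin n, qfact (2 * k + p + 2 * (i : ℕ))
            * qint (2 * (l i + (n - 1 - (i : ℕ))) + p + 1))
        * (∏ i : Fin n, ∏ j ∈ Finset.Ioi i,
            qint ((l i + (n - 1 - (i : ℕ))) - (l j + (n - 1 - (j : ℕ))))
              * qint ((l i + (n - 1 - (i : ℕ))) + (l j + (n - 1 - (j : ℕ))) + p + 1))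
        / (∏ i : Fin n,
            qfact (k - l i + (i : ℕ))
              * qfact (k + 2 * n - 1 - (i : ℕ) + l i + p)) :=
  stmt5_general n k p l hl hbd

end
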